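/- arXiv:1603.05321 — 10 statements merged into one kernel-verified Lean document; each statement's English description precedes it below -/
import Mathlib

section
/- Let Φ = (φ_n) be a frame for a separable Hilbert space H with canonical dual frame Φ̃, and let m = (m_n) be a sequence of nonzero scalars. Suppose G = (g_n) is a sequence in H such that for every dual frame Φ^d = (φ_n^d) of Φ and every f ∈ H, the series Σ_n m_n ⟨f, φ_n^d⟩ g_n converges to 0. Then g_n = 0 for all n. -/
open scoped ComplexConjugate ComplexInnerProductSpace

variable {H : Type*} [NormedAddCommGroup H] [InnerProductSpace ℂ H] [CompleteSpace H]

/-- `Φ` is a Bessel sequence in `H`. -/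
def IsBessel (Φ : ℕ → H) : Prop :=
  ∃ B : ℝ, 0 < B ∧ ∀ f : H, Summable (fun n => ‖⟪Φ n, f⟫‖ ^ 2) ∧
    ∑' n, ‖⟪Φ n, f⟫‖ ^ 2 ≤ B * ‖f‖ ^ 2

/-- `Φ` is a frame for `H`. -/
def IsFrame (Φ : ℕ → H) : Prop :=
  ∃ A B : ℝ, 0 < A ∧ 0 < B ∧ ∀ f : H, Summable (fun n => ‖⟪Φ n, f⟫‖ ^ 2) ∧
    A * ‖f‖ ^ 2 ≤ ∑' n, ‖⟪Φ n, f⟫‖ ^ 2 ∧ ∑' n, ‖⟪Φ n, f⟫‖ ^ 2 ≤ B * ‖f‖ ^ 2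

/-- `F` is a dual frame of the frame `Φ`:
`f = Σ ⟨f, Φ n⟩ F n = Σ ⟨f, F n⟩ Φ n` for all `f` (paper convention `⟨f, x⟩ = ⟪x, f⟫`). -/
def IsDualFrame (Φ F : ℕ → H) : Prop :=
  IsFrame F ∧ ∀ f : H, HasSum (fun n => ⟪Φ n, f⟫ • F n) f ∧ HasSum (fun n => ⟪F n, f⟫ • Φ n) f

/-- `F` is an analysis pseudo-dual of `Φ`: `f = Σ ⟨f, F n⟩ Φ n` for all `f`. -/
def IsAPseudoDual (Φ F : ℕ → H) : Prop := ∀ f : H, HasSum (fun n => ⟪F n, f⟫ • Φ n) f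

/-- `F` is a synthesis pseudo-dual of `Φ`: `f = Σ ⟨f, Φ n⟩ F n` for all `f`. -/
def IsSPseudoDual (Φ F : ℕ → H) : Prop := ∀ f : H, HasSum (fun n => ⟪Φ n, f⟫ • F n) f

/-- The frame operator `S_Φ f = Σ ⟨f, Φ n⟩ Φ n`. -/
noncomputable def frameOp (Φ : ℕ → H) (f : H) : H := ∑' n, ⟪Φ n, f⟫ • Φ n

/-- `m` is semi-normalized: `0 < a ≤ ‖m n‖ ≤ b < ∞`. -/
def SemiNormalized (m : ℕ → ℂ) : Prop := ∃ a b : ℝ, 0 < a ∧ ∀ n, a ≤ ‖m n‖ ∧ ‖m n‖ ≤ b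

/-!
Let `T` be the analysis operator of `Φ` and `S = T† T` its frame operator. Besides the canonical
dual `φ̃ = S⁻¹ φ`, every `φ̃_n + conj(b_n) h` with `T† b = 0` is a dual frame. Testing the
hypothesis on these two duals with `f = h = g_k` shows that `Σ m_n b_n g_n = 0` for every
`b ∈ ker T†`; the canonical dual alone gives it for `b = T_φ̃ φ_k`, where `T_φ̃` is the analysis
operator of `φ̃`. As `δ_k - T_φ̃ φ_k ∈ ker T†`, it holds for `b = δ_k`, i.e. `m_k g_k = 0`.
-/

open scoped lp InnerProduct

lemma lp.norm_sq_eq_tsum {ι : Type*} {E : ι → Type*} [∀ i, NormedAddCommGroup (E i)]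
    (c : lp E 2) : ‖c‖ ^ 2 = ∑' i, ‖c i‖ ^ 2 := by
  have h := lp.norm_rpow_eq_tsum (p := 2) (by norm_num) c
  simpa only [ENNReal.toReal_ofNat, Real.rpow_two] using h

omit [CompleteSpace H] in
lemma isBessel_of_analysis {Φ : ℕ → H} (T : H →L[ℂ] ℓ²(ℕ, ℂ))
    (hT : ∀ f n, T f n = ⟪Φ n, f⟫) : IsBessel Φ := by
  refine ⟨‖T‖ ^ 2 + 1, by positivity, fun f => ⟨?_, ?_⟩⟩
  · have h := (memℓp_gen_iff (p := 2) (by norm_num)).mp (lp.memℓp (T f))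
    simpa only [ENNReal.toReal_ofNat, Real.rpow_two, hT] using h
  · calc ∑' n, ‖⟪Φ n, f⟫‖ ^ 2 = ‖T f‖ ^ 2 := by simp only [lp.norm_sq_eq_tsum, hT]
      _ ≤ (‖T‖ * ‖f‖) ^ 2 := by gcongr; exact T.le_opNorm f
      _ ≤ (‖T‖ ^ 2 + 1) * ‖f‖ ^ 2 := by nlinarith [sq_nonneg ‖f‖]

namespace IsBessel

variable {Φ : ℕ → H}

omit [CompleteSpace H] in
lemma memℓp_inner (hΦ : IsBessel Φ) (f : H) : Memℓp (fun n => ⟪Φ n, f⟫) 2 := by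
  obtain ⟨B, -, hB⟩ := hΦ
  exact memℓp_gen (by simpa only [ENNReal.toReal_ofNat, Real.rpow_two] using (hB f).1)

noncomputable def analysis (hΦ : IsBessel Φ) : H →L[ℂ] ℓ²(ℕ, ℂ) :=
  LinearMap.mkContinuousOfExistsBound
    { toFun := fun f => ⟨_, hΦ.memℓp_inner f⟩
      map_add' := fun f g => by ext n; exact inner_add_right _ _ _
      map_smul' := fun a f => by ext n; exact inner_smul_right _ _ _ }
    (by
      obtain ⟨B, hB, hbound⟩ := hΦ
      refine ⟨Real.sqrt B, fun f => ?_⟩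
      rw [← Real.sqrt_sq (norm_nonneg _), ← Real.sqrt_sq (norm_nonneg f), ← Real.sqrt_mul hB.le]
      refine Real.sqrt_le_sqrt ?_
      rw [lp.norm_sq_eq_tsum]
      exact (hbound f).2)

omit [CompleteSpace H] in
@[simp]
lemma analysis_apply (hΦ : IsBessel Φ) (f : H) (n : ℕ) : hΦ.analysis f n = ⟪Φ n, f⟫ := rfl

noncomputable def synthesis (hΦ : IsBessel Φ) : ℓ²(ℕ, ℂ) →L[ℂ] H := hΦ.analysis†

lemma synthesis_single (hΦ : IsBessel Φ) (n : ℕ) (a : ℂ) :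
    hΦ.synthesis (lp.single 2 n a) = a • Φ n := by
  refine ext_inner_right ℂ fun f => ?_
  rw [synthesis, ContinuousLinearMap.adjoint_inner_left, lp.inner_single_left, inner_smul_left,
    analysis_apply, RCLike.inner_apply, mul_comm]

lemma hasSum_synthesis (hΦ : IsBessel Φ) (c : ℓ²(ℕ, ℂ)) :
    HasSum (fun n => c n • Φ n) (hΦ.synthesis c) := by
  have h := (lp.hasSum_single (by norm_num) c).mapL hΦ.synthesis
  simpa only [Function.comp_def, synthesis_single] using h

lemma synthesis_analysis {F : ℕ → H} (hΦ : IsBessel Φ) (hF : IsBessel F)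
    (hrec : ∀ f, HasSum (fun n => ⟪F n, f⟫ • Φ n) f) (f : H) :
    hΦ.synthesis (hF.analysis f) = f :=
  (hΦ.hasSum_synthesis (hF.analysis f)).unique (hrec f)

omit [CompleteSpace H] in
lemma norm_analysis_sq (hΦ : IsBessel Φ) (f : H) :
    ‖hΦ.analysis f‖ ^ 2 = ∑' n, ‖⟪Φ n, f⟫‖ ^ 2 := by
  simp only [lp.norm_sq_eq_tsum, analysis_apply]

noncomputable def frameOperator (hΦ : IsBessel Φ) : H →L[ℂ] H :=
  hΦ.synthesis ∘L hΦ.analysis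

lemma hasSum_frameOperator (hΦ : IsBessel Φ) (f : H) :
    HasSum (fun n => ⟪Φ n, f⟫ • Φ n) (hΦ.frameOperator f) :=
  hΦ.hasSum_synthesis (hΦ.analysis f)

lemma inner_frameOperator_left (hΦ : IsBessel Φ) (f g : H) :
    ⟪hΦ.frameOperator f, g⟫ = ⟪hΦ.analysis f, hΦ.analysis g⟫ := by
  rw [frameOperator, ContinuousLinearMap.comp_apply, synthesis,
    ContinuousLinearMap.adjoint_inner_left]

lemma inner_frameOperator_right (hΦ : IsBessel Φ) (f g : H) :
    ⟪f, hΦ.frameOperator g⟫ = ⟪hΦ.analysis f, hΦ.analysis g⟫ := by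
  rw [frameOperator, ContinuousLinearMap.comp_apply, synthesis,
    ContinuousLinearMap.adjoint_inner_right]

end IsBessel

namespace IsFrame

variable {Φ : ℕ → H}

omit [CompleteSpace H] in
lemma isBessel (hΦ : IsFrame Φ) : IsBessel Φ := by
  obtain ⟨_, B, -, hB, h⟩ := hΦ
  exact ⟨B, hB, fun f => ⟨(h f).1, (h f).2.2⟩⟩

lemma isUnit_frameOperator (hΦ : IsFrame Φ) : IsUnit hΦ.isBessel.frameOperator := by
  obtain ⟨A, _, hA, -, h⟩ := id hΦ
  refine ContinuousLinearMap.isUnit_of_forall_le_norm_inner_map _ (c := A.toNNReal)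
    (Real.toNNReal_pos.mpr hA) fun f => ?_
  simpa [IsBessel.inner_frameOperator_left, IsBessel.norm_analysis_sq, mul_comm, hA.le]
    using (h f).2.1

/-- `Ring.inverse` is `0` on non-units; the frame operator is a unit by `isUnit_frameOperator`. -/
noncomputable def canonicalDual (hΦ : IsFrame Φ) (n : ℕ) : H :=
  Ring.inverse hΦ.isBessel.frameOperator (Φ n)

lemma frameOperator_inverse_apply (hΦ : IsFrame Φ) (f : H) :
    hΦ.isBessel.frameOperator (Ring.inverse hΦ.isBessel.frameOperator f) = f :=
  DFunLike.congr_fun (Ring.mul_inverse_cancel _ hΦ.isUnit_frameOperator) f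

lemma inverse_frameOperator_apply (hΦ : IsFrame Φ) (f : H) :
    Ring.inverse hΦ.isBessel.frameOperator (hΦ.isBessel.frameOperator f) = f :=
  DFunLike.congr_fun (Ring.inverse_mul_cancel _ hΦ.isUnit_frameOperator) f

lemma inner_canonicalDual (hΦ : IsFrame Φ) (n : ℕ) (f : H) :
    ⟪hΦ.canonicalDual n, f⟫ = ⟪Φ n, Ring.inverse hΦ.isBessel.frameOperator f⟫ := by
  conv_lhs => rw [← hΦ.frameOperator_inverse_apply f]
  rw [IsBessel.inner_frameOperator_right, ← IsBessel.inner_frameOperator_left,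
    canonicalDual, hΦ.frameOperator_inverse_apply]

lemma isBessel_canonicalDual (hΦ : IsFrame Φ) : IsBessel hΦ.canonicalDual :=
  isBessel_of_analysis (hΦ.isBessel.analysis ∘L Ring.inverse hΦ.isBessel.frameOperator)
    fun f n => (hΦ.inner_canonicalDual n f).symm

lemma of_isBessel_of_hasSum {F : ℕ → H} (hΦ : IsBessel Φ) (hF : IsBessel F)
    (hrec : ∀ f, HasSum (fun n => ⟪F n, f⟫ • Φ n) f) : IsFrame F := by
  obtain ⟨B, hB, hbound⟩ := id hF
  refine ⟨(‖hΦ.synthesis‖ ^ 2 + 1)⁻¹, B, by positivity, hB,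
    fun f => ⟨(hbound f).1, ?_, (hbound f).2⟩⟩
  rw [inv_mul_le_iff₀ (by positivity), ← hF.norm_analysis_sq]
  calc ‖f‖ ^ 2 = ‖hΦ.synthesis (hF.analysis f)‖ ^ 2 := by rw [hΦ.synthesis_analysis hF hrec]
    _ ≤ (‖hΦ.synthesis‖ * ‖hF.analysis f‖) ^ 2 := by gcongr; exact ContinuousLinearMap.le_opNorm _ _
    _ ≤ (‖hΦ.synthesis‖ ^ 2 + 1) * ‖hF.analysis f‖ ^ 2 := by nlinarith [sq_nonneg ‖hF.analysis f‖]

end IsFrame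

namespace IsDualFrame

variable {Φ F : ℕ → H}

lemma of_isBessel (hΦ : IsBessel Φ) (hF : IsBessel F)
    (hsyn : ∀ f, HasSum (fun n => ⟪Φ n, f⟫ • F n) f)
    (hana : ∀ f, HasSum (fun n => ⟪F n, f⟫ • Φ n) f) : IsDualFrame Φ F :=
  ⟨IsFrame.of_isBessel_of_hasSum hΦ hF hana, fun f => ⟨hsyn f, hana f⟩⟩

lemma add_conj_smul (hΦ : IsBessel Φ) (hF : IsDualFrame Φ F) {b : ℓ²(ℕ, ℂ)}
    (hb : hΦ.synthesis b = 0) (h₀ : H) : IsDualFrame Φ (fun n => F n + conj (b n) • h₀) := by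
  have hzero (f : H) : HasSum (fun n => ⟪Φ n, f⟫ * conj (b n)) 0 := by
    have h := lp.hasSum_inner (𝕜 := ℂ) b (hΦ.analysis f)
    rw [← ContinuousLinearMap.adjoint_inner_left, ← IsBessel.synthesis, hb, inner_zero_left] at h
    simpa [RCLike.inner_apply] using h
  refine of_isBessel hΦ (isBessel_of_analysis
    (hF.1.isBessel.analysis + (innerSL ℂ h₀).smulRight b) fun f n => ?_) (fun f => ?_) (fun f => ?_)
  · rw [inner_add_left, inner_smul_left, RCLike.conj_conj, mul_comm]
    rfl
  · simpa [smul_add, smul_smul] using (hF.2 f).1.add ((hzero f).smul_const h₀)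
  · convert (hF.2 f).2.add ((hΦ.hasSum_synthesis b).const_smul ⟪h₀, f⟫) using 1
    · ext n
      simp [add_smul, smul_smul]
    · simp [hb]

end IsDualFrame

lemma IsFrame.canonicalDual_isDualFrame {Φ : ℕ → H} (hΦ : IsFrame Φ) :
    IsDualFrame Φ hΦ.canonicalDual := by
  refine IsDualFrame.of_isBessel hΦ.isBessel hΦ.isBessel_canonicalDual (fun f => ?_) (fun f => ?_)
  · have h := (hΦ.isBessel.hasSum_frameOperator f).mapL (Ring.inverse hΦ.isBessel.frameOperator)
    simpa only [Function.comp_def, map_smul, hΦ.inverse_frameOperator_apply, canonicalDual] using h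
  · simp_rw [hΦ.inner_canonicalDual]
    simpa only [hΦ.frameOperator_inverse_apply] using
      hΦ.isBessel.hasSum_frameOperator (Ring.inverse hΦ.isBessel.frameOperator f)

def synthesisKernel (m : ℕ → ℂ) (G : ℕ → H) : Submodule ℂ (ℕ → ℂ) where
  carrier := {c | HasSum (fun n => (m n * c n) • G n) 0}
  add_mem' {c d} hc hd := by
    simpa only [Set.mem_ofPred_eq, Pi.add_apply, mul_add, add_smul, add_zero] using hc.add hd
  zero_mem' := by
    simpa only [Set.mem_ofPred_eq, Pi.zero_apply, mul_zero, zero_smul] using hasSum_zero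
  smul_mem' a c hc := by
    have h := hc.const_smul a
    rw [smul_zero] at h
    refine h.congr_fun fun n => ?_
    rw [Pi.smul_apply, smul_eq_mul, smul_smul, mul_left_comm]

omit [CompleteSpace H] in
lemma smul_eq_zero_of_single_mem_synthesisKernel {m : ℕ → ℂ} {G : ℕ → H} {k : ℕ}
    (h : Pi.single k 1 ∈ synthesisKernel m G) : m k • G k = 0 := by
  have h' := (hasSum_single k fun n hn => by simp [hn]).unique h
  simpa using h'

lemma mem_synthesisKernel_of_synthesis_eq_zero {Φ F G : ℕ → H} {m : ℕ → ℂ} (hΦ : IsBessel Φ)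
    (hF : IsDualFrame Φ F)
    (hG : ∀ D, IsDualFrame Φ D → ∀ f, (fun n => ⟪D n, f⟫) ∈ synthesisKernel m G)
    {b : ℓ²(ℕ, ℂ)} (hb : hΦ.synthesis b = 0) {h₀ : H} (h₀_ne : h₀ ≠ 0) :
    ⇑b ∈ synthesisKernel m G := by
  have h := (synthesisKernel m G).sub_mem (hG _ (hF.add_conj_smul hΦ hb h₀) h₀) (hG F hF h₀)
  have hdiff : (fun n => ⟪F n + conj (b n) • h₀, h₀⟫) - (fun n => ⟪F n, h₀⟫) = ⟪h₀, h₀⟫ • ⇑b := by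
    ext n
    simp
  rw [hdiff] at h
  exact (Submodule.smul_mem_iff _ (inner_self_ne_zero.mpr h₀_ne)).mp h

theorem stmt0 (Φ G : ℕ → H) (m : ℕ → ℂ) (hΦ : IsFrame Φ) (hm : ∀ n, m n ≠ 0)
    (hG : ∀ Φd : ℕ → H, IsDualFrame Φ Φd → ∀ f : H,
      HasSum (fun n => (m n * ⟪Φd n, f⟫) • G n) 0) :
    ∀ n, G n = 0 := by
  intro k
  by_contra hGk
  have hcan := hΦ.canonicalDual_isDualFrame
  set T := hΦ.isBessel_canonicalDual.analysis
  have hb : hΦ.isBessel.synthesis (lp.single 2 k 1 - T (Φ k)) = 0 := by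
    rw [map_sub, IsBessel.synthesis_single, one_smul,
      IsBessel.synthesis_analysis _ _ fun f => (hcan.2 f).2, sub_self]
  have hsingle : Pi.single k 1 ∈ synthesisKernel m G := by
    rw [← lp.coeFn_single, ← sub_add_cancel (lp.single 2 k 1) (T (Φ k))]
    exact (synthesisKernel m G).add_mem
      (mem_synthesisKernel_of_synthesis_eq_zero hΦ.isBessel hcan hG hb hGk) (hG _ hcan (Φ k))
  exact smul_ne_zero (hm k) hGk (smul_eq_zero_of_single_mem_synthesisKernel hsingle)
end

section
/- Let Φ and Ψ be frames for H, m semi-normalized, M = M_{m,Φ,Ψ} invertible, and Φ† = ((M^{-1})^*(m̄_n ψ_n)). Then for every s-pseudo-dual Ψ^{sd} of Ψ, the multiplier M_{1/m, Ψ^{sd}, Φ†} is well-defined on H and M^{-1} = M_{1/m, Ψ^{sd}, Φ†}. -/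
open scoped ComplexConjugate ComplexInnerProductSpace

variable {H : Type*} [NormedAddCommGroup H] [InnerProductSpace ℂ H] [CompleteSpace H]

theorem stmt4 (Φ Ψ : ℕ → H) (m : ℕ → ℂ) (hΦ : IsFrame Φ) (hΨ : IsFrame Ψ)
    (hm : SemiNormalized m) (M N : H →L[ℂ] H)
    (hM : ∀ f : H, HasSum (fun n => (m n * ⟪Ψ n, f⟫) • Φ n) (M f))
    (hNM : ∀ f : H, N (M f) = f) (hMN : ∀ f : H, M (N f) = f) :
    ∀ Ψsd : ℕ → H, IsSPseudoDual Ψ Ψsd → ∀ f : H,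
      HasSum (fun n =>
        ((m n)⁻¹ * ⟪(ContinuousLinearMap.adjoint N) ((starRingEnd ℂ) (m n) • Ψ n), f⟫) • Ψsd n)
        (N f) := by
  intro Ψsd hΨsd f
  obtain ⟨a, b, ha, hab⟩ := hm
  have hmn : ∀ n, m n ≠ 0 := fun n => by
    have := (hab n).1
    intro h; rw [h] at this; simp at this; linarith
  have key : ∀ n, ((m n)⁻¹ * ⟪(ContinuousLinearMap.adjoint N) ((starRingEnd ℂ) (m n) • Ψ n), f⟫)
      = ⟪Ψ n, N f⟫ := by
    intro n
    rw [ContinuousLinearMap.adjoint_inner_left, inner_smul_left]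
    simp [← mul_assoc, inv_mul_cancel₀ (hmn n)]
  simp only [key]
  exact hΨsd (N f)
end

section
/- Let Φ and Ψ be frames for H, m semi-normalized, M = M_{m,Φ,Ψ} invertible, and Ψ† = (M^{-1}(m_n φ_n)). Then for every a-pseudo-dual Φ^{ad} of Φ, the multiplier M_{1/m, Ψ†, Φ^{ad}} is well-defined on H and M^{-1} = M_{1/m, Ψ†, Φ^{ad}}. -/
open scoped ComplexConjugate ComplexInnerProductSpace

variable {H : Type*} [NormedAddCommGroup H] [InnerProductSpace ℂ H] [CompleteSpace H]

theorem stmt5 (Φ Ψ : ℕ → H) (m : ℕ → ℂ) (hΦ : IsFrame Φ) (hΨ : IsFrame Ψ)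
    (hm : SemiNormalized m) (M N : H →L[ℂ] H)
    (hM : ∀ f : H, HasSum (fun n => (m n * ⟪Ψ n, f⟫) • Φ n) (M f))
    (hNM : ∀ f : H, N (M f) = f) (hMN : ∀ f : H, M (N f) = f) :
    ∀ Φad : ℕ → H, IsAPseudoDual Φ Φad → ∀ f : H,
      HasSum (fun n => ((m n)⁻¹ * ⟪Φad n, f⟫) • N (m n • Φ n)) (N f) := by
  intro Φad hd f
  obtain ⟨a, b, ha, hab⟩ := hm
  have hmne : ∀ n, m n ≠ 0 := fun n => by
    intro h
    have := (hab n).1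
    rw [h, norm_zero] at this
    linarith
  have h := (hd f).mapL N
  convert h using 2 with n
  rw [map_smul, smul_smul, mul_comm ((m n)⁻¹) _, mul_assoc,
    inv_mul_cancel₀ (hmne n), mul_one, ← map_smul]
end

section
/- Let Φ, Ψ be frames for H, m semi-normalized, M = M_{m,Φ,Ψ} invertible, and Φ† = ((M^{-1})^*(m̄_n ψ_n)). If F = (f_n) is a sequence in H such that M_{1/m, F, Φ†} is well-defined on H and equals M^{-1}, then F is an s-pseudo-dual of Ψ, i.e., f = Σ_n ⟨f,ψ_n⟩ f_n for all f ∈ H. -/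
open scoped ComplexConjugate ComplexInnerProductSpace

variable {H : Type*} [NormedAddCommGroup H] [InnerProductSpace ℂ H] [CompleteSpace H]

theorem stmt6 (Φ Ψ : ℕ → H) (m : ℕ → ℂ) (hΦ : IsFrame Φ) (hΨ : IsFrame Ψ)
    (hm : SemiNormalized m) (M N : H →L[ℂ] H)
    (hM : ∀ f : H, HasSum (fun n => (m n * ⟪Ψ n, f⟫) • Φ n) (M f))
    (hNM : ∀ f : H, N (M f) = f) (hMN : ∀ f : H, M (N f) = f) :
    ∀ F : ℕ → H,
      (∀ f : H, HasSum (fun n =>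
        ((m n)⁻¹ * ⟪(ContinuousLinearMap.adjoint N) ((starRingEnd ℂ) (m n) • Ψ n), f⟫) • F n)
        (N f)) →
      IsSPseudoDual Ψ F := by
  intro F hF f
  obtain ⟨a, b, ha, hab⟩ := hm
  have hmne : ∀ n, m n ≠ 0 := fun n hn => by
    have := (hab n).1; rw [hn, norm_zero] at this; linarith
  have h := hF (M f)
  rw [hNM f] at h
  convert h using 2 with n
  rw [ContinuousLinearMap.adjoint_inner_left, inner_smul_left, hNM f,
    starRingEnd_self_apply, ← mul_assoc,
    inv_mul_cancel₀ (hmne n), one_mul]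
end

section
/- Let Φ, Ψ be frames for H, m semi-normalized, M = M_{m,Φ,Ψ} invertible, and Ψ† = (M^{-1}(m_n φ_n)). If G = (g_n) is a sequence in H such that M_{1/m, Ψ†, G} is well-defined on H and equals M^{-1}, then G is an a-pseudo-dual of Φ, i.e., f = Σ_n ⟨f,g_n⟩ φ_n for all f ∈ H. -/
open scoped ComplexConjugate ComplexInnerProductSpace

variable {H : Type*} [NormedAddCommGroup H] [InnerProductSpace ℂ H] [CompleteSpace H]

theorem stmt7 (Φ Ψ : ℕ → H) (m : ℕ → ℂ) (hΦ : IsFrame Φ) (hΨ : IsFrame Ψ)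
    (hm : SemiNormalized m) (M N : H →L[ℂ] H)
    (hM : ∀ f : H, HasSum (fun n => (m n * ⟪Ψ n, f⟫) • Φ n) (M f))
    (hNM : ∀ f : H, N (M f) = f) (hMN : ∀ f : H, M (N f) = f) :
    ∀ G : ℕ → H,
      (∀ f : H, HasSum (fun n => ((m n)⁻¹ * ⟪G n, f⟫) • N (m n • Φ n)) (N f)) →
      IsAPseudoDual Φ G := by
  intro G hG f
  obtain ⟨a, b, ha, hab⟩ := hm
  have hm0 : ∀ n, m n ≠ 0 := fun n hn => by
    have := (hab n).1
    rw [hn, norm_zero] at this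
    linarith
  have h1 := hG f
  have heq : ∀ n, ((m n)⁻¹ * ⟪G n, f⟫) • N (m n • Φ n) = ⟪G n, f⟫ • N (Φ n) := by
    intro n
    rw [map_smul, smul_smul, mul_assoc, mul_comm (⟪G n, f⟫), ← mul_assoc,
      inv_mul_cancel₀ (hm0 n), one_mul]
  simp only [heq] at h1
  have h2 := h1.mapL M
  simp only [map_smul, hMN] at h2
  exact h2
end

section
/- Let Φ and Ψ be frames for H, and let m be a sequence of nonzero scalars such that m̄Ψ = (m̄_n ψ_n) is a frame for H and M = M_{m,Φ,Ψ} is invertible. Then Φ† := ((M^{-1})^*(m̄_n ψ_n)) is a dual frame of Φ, and it is the unique sequence in H satisfying M^{-1} = M_{1/m, Ψ^{sd}, Φ†} for every s-pseudo-dual Ψ^{sd} of Ψ. -/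
open scoped ComplexConjugate ComplexInnerProductSpace

variable {H : Type*} [NormedAddCommGroup H] [InnerProductSpace ℂ H] [CompleteSpace H]

set_option linter.unusedSectionVars false

lemma synth_norm_est {G : ℕ → H} {B : ℝ}
    (hG : ∀ f : H, Summable (fun n => ‖⟪G n, f⟫‖ ^ 2) ∧ ∑' n, ‖⟪G n, f⟫‖ ^ 2 ≤ B * ‖f‖ ^ 2)
    (c : ℕ → ℂ) (t : Finset ℕ) :
    ‖∑ n ∈ t, c n • G n‖ ≤ Real.sqrt B * Real.sqrt (∑ n ∈ t, ‖c n‖ ^ 2) := by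
  set v := ∑ n ∈ t, c n • G n with hv
  have h1 : ‖v‖ ^ 2 = RCLike.re (⟪v, v⟫) := InnerProductSpace.norm_sq_eq_re_inner v
  have h2 : ⟪v, v⟫ = ∑ n ∈ t, (starRingEnd ℂ) (c n) * ⟪G n, v⟫ := by
    rw [hv, sum_inner]
    simp [inner_smul_left, inner_sum, inner_smul_right, Finset.mul_sum, mul_left_comm]
  have h3 : ‖v‖ ^ 2 ≤ ∑ n ∈ t, ‖c n‖ * ‖⟪G n, v⟫‖ := by
    calc ‖v‖ ^ 2 = RCLike.re (⟪v, v⟫) := h1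
      _ ≤ ‖⟪v, v⟫‖ := by
          have := RCLike.abs_re_le_norm (⟪v, v⟫)
          exact (le_abs_self _).trans this
      _ ≤ ∑ n ∈ t, ‖(starRingEnd ℂ) (c n) * ⟪G n, v⟫‖ := by rw [h2]; exact norm_sum_le _ _
      _ = ∑ n ∈ t, ‖c n‖ * ‖⟪G n, v⟫‖ := by simp [norm_mul]
  have h4 : ∑ n ∈ t, ‖c n‖ * ‖⟪G n, v⟫‖ ≤
      Real.sqrt (∑ n ∈ t, ‖c n‖ ^ 2) * Real.sqrt (∑ n ∈ t, ‖⟪G n, v⟫‖ ^ 2) :=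
    Real.sum_mul_le_sqrt_mul_sqrt _ _ _
  have h5 : ∑ n ∈ t, ‖⟪G n, v⟫‖ ^ 2 ≤ B * ‖v‖ ^ 2 := by
    refine le_trans ((hG v).1.sum_le_tsum t (fun n _ => by positivity)) (hG v).2
  have h6 : Real.sqrt (∑ n ∈ t, ‖⟪G n, v⟫‖ ^ 2) ≤ Real.sqrt B * ‖v‖ := by
    rw [← Real.sqrt_sq (norm_nonneg v), ← Real.sqrt_mul']
    · exact Real.sqrt_le_sqrt (by simpa [Real.sq_sqrt (sq_nonneg (‖v‖))] using h5)
    · positivity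
  have hc : (0:ℝ) ≤ Real.sqrt (∑ n ∈ t, ‖c n‖ ^ 2) := Real.sqrt_nonneg _
  have hB : (0:ℝ) ≤ Real.sqrt B := Real.sqrt_nonneg _
  have key : ‖v‖ ^ 2 ≤ Real.sqrt (∑ n ∈ t, ‖c n‖ ^ 2) * (Real.sqrt B * ‖v‖) := by
    calc ‖v‖ ^ 2 ≤ ∑ n ∈ t, ‖c n‖ * ‖⟪G n, v⟫‖ := h3
      _ ≤ Real.sqrt (∑ n ∈ t, ‖c n‖ ^ 2) * Real.sqrt (∑ n ∈ t, ‖⟪G n, v⟫‖ ^ 2) := h4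
      _ ≤ Real.sqrt (∑ n ∈ t, ‖c n‖ ^ 2) * (Real.sqrt B * ‖v‖) := by
          exact mul_le_mul_of_nonneg_left h6 hc
  rcases eq_or_lt_of_le (norm_nonneg v) with h0 | h0
  · rw [← h0]; positivity
  · nlinarith [key]

lemma synth_summable {G : ℕ → H} {B : ℝ}
    (hG : ∀ f : H, Summable (fun n => ‖⟪G n, f⟫‖ ^ 2) ∧ ∑' n, ‖⟪G n, f⟫‖ ^ 2 ≤ B * ‖f‖ ^ 2)
    {c : ℕ → ℂ} (hc : Summable (fun n => ‖c n‖ ^ 2)) :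
    Summable (fun n => c n • G n) := by
  rw [summable_iff_vanishing]
  intro e he
  obtain ⟨ε, hε, hball⟩ := Metric.mem_nhds_iff.1 he
  have hδ : (0:ℝ) < (ε / (Real.sqrt B + 1)) ^ 2 := by
    have : (0:ℝ) < Real.sqrt B + 1 := by positivity
    positivity
  obtain ⟨s, hs⟩ := (summable_iff_vanishing.1 hc) (Metric.ball 0 ((ε / (Real.sqrt B + 1)) ^ 2))
    (Metric.ball_mem_nhds 0 hδ)
  refine ⟨s, fun t ht => hball ?_⟩
  have h1 := hs t ht
  rw [Metric.mem_ball, dist_zero_right] at h1 ⊢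
  have hnn : (0:ℝ) ≤ ∑ n ∈ t, ‖c n‖ ^ 2 := by positivity
  rw [Real.norm_eq_abs, abs_of_nonneg hnn] at h1
  have h2 : Real.sqrt (∑ n ∈ t, ‖c n‖ ^ 2) < ε / (Real.sqrt B + 1) := by
    rw [show ε / (Real.sqrt B + 1) = Real.sqrt ((ε / (Real.sqrt B + 1)) ^ 2) from
      (Real.sqrt_sq (by positivity)).symm]
    exact Real.sqrt_lt_sqrt hnn h1
  calc ‖∑ n ∈ t, c n • G n‖ ≤ Real.sqrt B * Real.sqrt (∑ n ∈ t, ‖c n‖ ^ 2) :=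
        synth_norm_est hG c t
    _ ≤ (Real.sqrt B + 1) * Real.sqrt (∑ n ∈ t, ‖c n‖ ^ 2) := by
        apply mul_le_mul_of_nonneg_right (by linarith [Real.sqrt_nonneg B]) (Real.sqrt_nonneg _)
    _ < (Real.sqrt B + 1) * (ε / (Real.sqrt B + 1)) := by
        apply mul_lt_mul_of_pos_left h2 (by positivity)
    _ = ε := by field_simp

theorem stmt9 (Φ Ψ : ℕ → H) (m : ℕ → ℂ) (hΦ : IsFrame Φ) (hΨ : IsFrame Ψ)
    (hm : ∀ n, m n ≠ 0) (hmΨ : IsFrame (fun n => (starRingEnd ℂ) (m n) • Ψ n))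
    (M N : H →L[ℂ] H)
    (hM : ∀ f : H, HasSum (fun n => (m n * ⟪Ψ n, f⟫) • Φ n) (M f))
    (hNM : ∀ f : H, N (M f) = f) (hMN : ∀ f : H, M (N f) = f) :
    IsDualFrame Φ (fun n => (ContinuousLinearMap.adjoint N) ((starRingEnd ℂ) (m n) • Ψ n)) ∧
    ∀ F : ℕ → H,
      (∀ Ψsd : ℕ → H, IsSPseudoDual Ψ Ψsd → ∀ f : H,
        HasSum (fun n => ((m n)⁻¹ * ⟪F n, f⟫) • Ψsd n) (N f))
      ↔ F = fun n => (ContinuousLinearMap.adjoint N) ((starRingEnd ℂ) (m n) • Ψ n) := by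
  constructor
  ·
      set Φd : ℕ → H := fun n => (ContinuousLinearMap.adjoint N) ((starRingEnd ℂ) (m n) • Ψ n) with hΦd
      have hip : ∀ (n : ℕ) (f : H), ⟪Φd n, f⟫ = m n * ⟪Ψ n, N f⟫ := by
        intro n f
        rw [hΦd, ContinuousLinearMap.adjoint_inner_left, inner_smul_left]
        simp
      have hipL : ∀ (n : ℕ) (f : H), ⟪Φd n, f⟫ = ⟪(starRingEnd ℂ) (m n) • Ψ n, N f⟫ := by
        intro n f
        rw [hΦd, ContinuousLinearMap.adjoint_inner_left]
      obtain ⟨A, B, hA, hB, hAB⟩ := hmΨ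
      constructor
      · -- frame
        refine ⟨A / (‖M‖ + 1) ^ 2, B * (‖N‖ + 1) ^ 2, by positivity, by positivity, fun f => ?_⟩
        obtain ⟨h1, h2, h3⟩ := hAB (N f)
        have hfle : ‖f‖ ≤ (‖M‖ + 1) * ‖N f‖ := by
          calc ‖f‖ = ‖M (N f)‖ := by rw [hMN]
            _ ≤ ‖M‖ * ‖N f‖ := M.le_opNorm _
            _ ≤ (‖M‖ + 1) * ‖N f‖ := by nlinarith [norm_nonneg (N f)]
        have hNle : ‖N f‖ ≤ (‖N‖ + 1) * ‖f‖ := by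
          calc ‖N f‖ ≤ ‖N‖ * ‖f‖ := N.le_opNorm _
            _ ≤ (‖N‖ + 1) * ‖f‖ := by nlinarith [norm_nonneg f]
        have heq : (fun n => ‖⟪Φd n, f⟫‖ ^ 2) = fun n => ‖⟪(starRingEnd ℂ) (m n) • Ψ n, N f⟫‖ ^ 2 := by
          funext n; rw [hipL]
        refine ⟨by rw [heq]; exact h1, ?_, ?_⟩
        · rw [heq]
          have hsq := mul_self_le_mul_self (norm_nonneg f) hfle
          have : A / (‖M‖ + 1) ^ 2 * ‖f‖ ^ 2 ≤ A * ‖N f‖ ^ 2 := by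
            rw [div_mul_eq_mul_div, div_le_iff₀ (by positivity)]
            nlinarith [norm_nonneg f, norm_nonneg (N f)]
          exact this.trans h2
        · rw [heq]
          refine h3.trans ?_
          have hsq := mul_self_le_mul_self (norm_nonneg (N f)) hNle
          nlinarith [norm_nonneg f, norm_nonneg (N f)]
      · intro f
        constructor
        · -- HasSum ⟪Φ n, f⟫ • Φd n = f
          obtain ⟨A2, B2, hA2, hB2, hAB2⟩ := hΦ
          have hc : Summable (fun n => ‖⟪Φ n, f⟫‖ ^ 2) := (hAB2 f).1
          have hG : ∀ g : H, Summable (fun n => ‖⟪(starRingEnd ℂ) (m n) • Ψ n, g⟫‖ ^ 2) ∧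
              ∑' n, ‖⟪(starRingEnd ℂ) (m n) • Ψ n, g⟫‖ ^ 2 ≤ B * ‖g‖ ^ 2 := by
            intro g; exact ⟨(hAB g).1, (hAB g).2.2⟩
          have hsum : Summable (fun n => ⟪Φ n, f⟫ • ((starRingEnd ℂ) (m n) • Ψ n)) :=
            synth_summable hG hc
          have hT := hsum.hasSum
          set T := ∑' n, ⟪Φ n, f⟫ • ((starRingEnd ℂ) (m n) • Ψ n) with hTdef
          have hT2 : HasSum (fun n => ⟪Φ n, f⟫ • Φd n) ((ContinuousLinearMap.adjoint N) T) := by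
            have := (ContinuousLinearMap.adjoint N).hasSum hT
            simpa [hΦd, map_smul] using this
          have hTf : (ContinuousLinearMap.adjoint N) T = f := by
            apply ext_inner_left ℂ
            intro g
            rw [ContinuousLinearMap.adjoint_inner_right]
            have h6 : HasSum (fun n => ⟪N g, ⟪Φ n, f⟫ • ((starRingEnd ℂ) (m n) • Ψ n)⟫) ⟪N g, T⟫ :=
              (innerSL ℂ (N g)).hasSum hT
            have h4 : HasSum (fun n => ⟪f, (m n * ⟪Ψ n, N g⟫) • Φ n⟫) ⟪f, M (N g)⟫ :=
              (innerSL ℂ f).hasSum (hM (N g))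
            have h5 := h4.star
            have heq2 : (fun n => star ⟪f, (m n * ⟪Ψ n, N g⟫) • Φ n⟫)
                = fun n => ⟪N g, ⟪Φ n, f⟫ • ((starRingEnd ℂ) (m n) • Ψ n)⟫ := by
              funext n
              simp only [inner_smul_right, star_mul', RCLike.star_def, inner_conj_symm, map_mul]
              ring
            rw [heq2] at h5
            rw [h6.unique h5, hMN, RCLike.star_def, inner_conj_symm]
          rwa [hTf] at hT2
        · -- HasSum ⟪Φd n, f⟫ • Φ n = f
          have heq : (fun n => ⟪Φd n, f⟫ • Φ n) = fun n => (m n * ⟪Ψ n, N f⟫) • Φ n := by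
            funext n; rw [hip]
          rw [heq]
          have := hM (N f)
          rwa [hMN] at this
  ·
      have hip : ∀ (n : ℕ) (f : H),
          ⟪(ContinuousLinearMap.adjoint N) ((starRingEnd ℂ) (m n) • Ψ n), f⟫ = m n * ⟪Ψ n, N f⟫ := by
        intro n f
        rw [ContinuousLinearMap.adjoint_inner_left, inner_smul_left]
        simp
      -- the basic s-pseudo-dual
      set Ψsd0 : ℕ → H := fun n => m n • N (Φ n) with hΨsd0
      have hsd0 : IsSPseudoDual Ψ Ψsd0 := by
        intro f
        have h := N.hasSum (hM f)
        rw [hNM] at h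
        have heq : (fun n => ⟪Ψ n, f⟫ • Ψsd0 n) = fun n => N ((m n * ⟪Ψ n, f⟫) • Φ n) := by
          funext n
          rw [hΨsd0]
          simp only [map_smul, smul_smul, mul_comm]
        rw [heq]
        exact h
      intro F
      constructor
      · intro hF
        funext k
        apply ext_inner_right ℂ
        intro f
        by_cases hH : ∀ x : H, x = 0
        · rw [hH f, inner_zero_right, inner_zero_right]
        · push_neg at hH
          obtain ⟨h, hh⟩ := hH
          -- d n = (m n)⁻¹ * ⟪F n, f⟫ - ⟪Ψ n, N f⟫
          set q : ℕ → ℂ := fun n => (m n)⁻¹ * ⟪F n, f⟫ with hq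
          set p : ℕ → ℂ := fun n => ⟪Ψ n, N f⟫ with hp
          set c : ℕ → ℂ := fun n => ⟪Ψ k, Ψsd0 n⟫ with hcdef
          set e : ℕ → ℂ := fun n => (if n = k then 1 else 0) - c n with hedef
          -- the coefficient expansion property
          have hc : ∀ g : H, HasSum (fun n => ⟪Ψ n, g⟫ * c n) ⟪Ψ k, g⟫ := by
            intro g
            have := (innerSL ℂ (Ψ k)).hasSum (hsd0 g)
            simpa [inner_smul_right] using this
          have hite : ∀ g : H, HasSum (fun n => ⟪Ψ n, g⟫ * (if n = k then 1 else 0)) ⟪Ψ k, g⟫ := by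
            intro g
            have heq : (fun n => ⟪Ψ n, g⟫ * (if n = k then 1 else 0))
                = fun n => (if n = k then ⟪Ψ k, g⟫ else 0) := by
              funext n
              by_cases hn : n = k <;> simp [hn]
            rw [heq]
            exact hasSum_ite_eq k _
          -- the perturbed s-pseudo-dual
          set Ψsd1 : ℕ → H := fun n => Ψsd0 n + e n • h with hΨsd1
          have hsd1 : IsSPseudoDual Ψ Ψsd1 := by
            intro g
            have hb : HasSum (fun n => (⟪Ψ n, g⟫ * e n) • h) ((0 : ℂ) • h) := by
              apply HasSum.smul_const
              have := (hite g).sub (hc g)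
              simpa [hedef, mul_sub] using this
            have := (hsd0 g).add (hb)
            simp only [zero_smul, add_zero] at this
            have heq : (fun n => ⟪Ψ n, g⟫ • Ψsd1 n)
                = fun n => ⟪Ψ n, g⟫ • Ψsd0 n + (⟪Ψ n, g⟫ * e n) • h := by
              funext n
              rw [hΨsd1]
              simp [smul_add, smul_smul]
            rw [heq]
            exact this
          -- hypothesis at both pseudo-duals
          have h0 := hF Ψsd0 hsd0 f
          have h1 := hF Ψsd1 hsd1 f
          have hBsum : HasSum (fun n => (q n * e n) • h) 0 := by
            have := h1.sub h0
            have heq : (fun n => q n • Ψsd1 n - q n • Ψsd0 n) = fun n => (q n * e n) • h := by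
              funext n
              rw [hΨsd1]
              simp [smul_add, smul_smul]
            simp only [sub_self] at this
            rwa [heq] at this
          have hqe : HasSum (fun n => q n * e n) 0 := by
            have h2 := (innerSL ℂ h).hasSum hBsum
            simp only [innerSL_apply_apply, inner_smul_right, inner_zero_right] at h2
            have hhh : (⟪h, h⟫ : ℂ) ≠ 0 := inner_self_ne_zero.mpr hh
            have := (hasSum_mul_right_iff (a₁ := (0:ℂ)) hhh).mp (by simpa using h2)
            exact this
          have hpe : HasSum (fun n => p n * e n) 0 := by
            have := (hite (N f)).sub (hc (N f))
            simpa [hedef, mul_sub] using this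
          -- d := q - p ; HasSum (d * e) 0
          have hde : HasSum (fun n => (q n - p n) * e n) 0 := by
            have := hqe.sub hpe
            simpa [sub_mul] using this
          -- HasSum (d * c) 0 from hA
          have hA0 : HasSum (fun n => (q n - p n) • Ψsd0 n) 0 := by
            have := h0.sub (hsd0 (N f))
            simp only [sub_self] at this
            have heq : (fun n => q n • Ψsd0 n - ⟪Ψ n, N f⟫ • Ψsd0 n)
                = fun n => (q n - p n) • Ψsd0 n := by
              funext n
              rw [hp, sub_smul]
            rwa [heq] at this
          have hdc : HasSum (fun n => (q n - p n) * c n) 0 := by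
            have := (innerSL ℂ (Ψ k)).hasSum hA0
            simpa [inner_smul_right, hcdef] using this
          -- combine
          have hdite : HasSum (fun n => (q n - p n) * (if n = k then 1 else 0)) 0 := by
            have := hde.add hdc
            simp only [add_zero] at this
            have heq : (fun n => (q n - p n) * e n + (q n - p n) * c n)
                = fun n => (q n - p n) * (if n = k then 1 else 0) := by
              funext n
              rw [hedef]
              ring
            rwa [heq] at this
          have hdk : q k - p k = 0 := by
            have heq : (fun n => (q n - p n) * (if n = k then 1 else 0))
                = fun n => (if n = k then q k - p k else 0) := by
              funext n
              by_cases hn : n = k <;> simp [hn]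
            rw [heq] at hdite
            exact (hasSum_ite_eq k _).unique hdite
          have hqp : (m k)⁻¹ * ⟪F k, f⟫ = ⟪Ψ k, N f⟫ := sub_eq_zero.mp hdk
          rw [hip]
          calc ⟪F k, f⟫ = m k * ((m k)⁻¹ * ⟪F k, f⟫) := by
                rw [← mul_assoc, mul_inv_cancel₀ (hm k), one_mul]
            _ = m k * ⟪Ψ k, N f⟫ := by rw [hqp]
      · intro hFeq
        subst hFeq
        intro Ψsd hsd f
        have heq : (fun n => ((m n)⁻¹ *
            ⟪(ContinuousLinearMap.adjoint N) ((starRingEnd ℂ) (m n) • Ψ n), f⟫) • Ψsd n)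
            = fun n => ⟪Ψ n, N f⟫ • Ψsd n := by
          funext n
          rw [hip]
          rw [← mul_assoc, inv_mul_cancel₀ (hm n), one_mul]
        rw [heq]
        exact hsd (N f)
end

section
/- Let Φ and Ψ be frames for H, m ∈ ℓ^∞ with m_n ≠ 0 for all n, and suppose M_{m,Φ,Ψ} is invertible on H. Then mΦ = (m_n φ_n) is a frame for H and m̄Ψ = (m̄_n ψ_n) is a frame for H. -/
open scoped ComplexConjugate ComplexInnerProductSpace

variable {H : Type*} [NormedAddCommGroup H] [InnerProductSpace ℂ H] [CompleteSpace H]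

lemma tsum_mul_le_aux (a b : ℕ → ℝ) (ha0 : ∀ n, 0 ≤ a n) (hb0 : ∀ n, 0 ≤ b n)
    (ha : Summable fun n => a n ^ 2) (hb : Summable fun n => b n ^ 2) :
    Summable (fun n => a n * b n) ∧
      ∑' n, a n * b n ≤ Real.sqrt (∑' n, a n ^ 2) * Real.sqrt (∑' n, b n ^ 2) := by
  have hab : Summable (fun n => a n * b n) := by
    refine Summable.of_nonneg_of_le (fun n => mul_nonneg (ha0 n) (hb0 n))
      (fun n => ?_) ((ha.add hb).div_const 2)
    nlinarith [sq_nonneg (a n - b n)]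
  refine ⟨hab, Summable.tsum_le_of_sum_le hab fun s => ?_⟩
  calc ∑ n ∈ s, a n * b n ≤ Real.sqrt (∑ n ∈ s, a n ^ 2) * Real.sqrt (∑ n ∈ s, b n ^ 2) :=
        Real.sum_mul_le_sqrt_mul_sqrt s a b
    _ ≤ Real.sqrt (∑' n, a n ^ 2) * Real.sqrt (∑' n, b n ^ 2) := by
        have h1 := Summable.sum_le_tsum s (fun n _ => sq_nonneg _) ha
        have h2 := Summable.sum_le_tsum s (fun n _ => sq_nonneg _) hb
        gcongr

omit [CompleteSpace H] in
lemma lower_aux (a b : ℕ → ℝ) (c : ℕ → ℂ) (g : H) (K : ℝ) (hK : 0 ≤ K)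
    (ha0 : ∀ n, 0 ≤ a n) (hb0 : ∀ n, 0 ≤ b n)
    (ha : Summable fun n => a n ^ 2) (hb : Summable fun n => b n ^ 2)
    (hbK : ∑' n, b n ^ 2 ≤ K * ‖g‖ ^ 2)
    (hc : HasSum c ⟪g, g⟫) (hcab : ∀ n, ‖c n‖ ≤ a n * b n) :
    ‖g‖ ^ 2 / (K + 1) ≤ ∑' n, a n ^ 2 := by
  have hta : 0 ≤ ∑' n, a n ^ 2 := tsum_nonneg fun n => sq_nonneg _
  rcases eq_or_ne g 0 with rfl | hg
  · simpa using hta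
  have hgn : 0 < ‖g‖ := norm_pos_iff.2 hg
  obtain ⟨hab, hcs⟩ := tsum_mul_le_aux a b ha0 hb0 ha hb
  have hcn : Summable (fun n => ‖c n‖) :=
    Summable.of_nonneg_of_le (fun n => norm_nonneg _) hcab hab
  have h1 : ‖g‖ ^ 2 ≤ ∑' n, a n * b n := by
    have e1 : ‖(⟪g, g⟫ : ℂ)‖ = ‖g‖ ^ 2 := by
      rw [inner_self_eq_norm_sq_to_K]; simp [Real.sqrt_sq hgn.le]
    calc ‖g‖ ^ 2 = ‖(⟪g, g⟫ : ℂ)‖ := e1.symm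
      _ = ‖∑' n, c n‖ := by rw [hc.tsum_eq]
      _ ≤ ∑' n, ‖c n‖ := norm_tsum_le_tsum_norm hcn
      _ ≤ ∑' n, a n * b n := Summable.tsum_le_tsum hcab hcn hab
  set s := Real.sqrt (∑' n, a n ^ 2) with hs
  have hs0 : 0 ≤ s := Real.sqrt_nonneg _
  have hs2 : s ^ 2 = ∑' n, a n ^ 2 := Real.sq_sqrt hta
  have htb : Real.sqrt (∑' n, b n ^ 2) ≤ Real.sqrt K * ‖g‖ := by
    rw [← Real.sqrt_sq hgn.le, ← Real.sqrt_mul hK]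
    exact Real.sqrt_le_sqrt hbK
  have h2 : ‖g‖ ^ 2 ≤ s * (Real.sqrt K * ‖g‖) := by
    refine h1.trans (hcs.trans ?_)
    exact mul_le_mul_of_nonneg_left htb hs0
  have h3 : ‖g‖ ≤ s * Real.sqrt K := by
    have := h2
    rw [sq] at this
    nlinarith
  have hK2 : Real.sqrt K ^ 2 = K := Real.sq_sqrt hK
  rw [div_le_iff₀ (by linarith : (0:ℝ) < K + 1), ← hs2]
  nlinarith [mul_self_le_mul_self hgn.le h3, Real.sqrt_nonneg K, sq_nonneg s]

theorem stmt10 (Φ Ψ : ℕ → H) (m : ℕ → ℂ) (hΦ : IsFrame Φ) (hΨ : IsFrame Ψ)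
    (hm : ∀ n, m n ≠ 0) (hmb : ∃ C : ℝ, ∀ n, ‖m n‖ ≤ C) (M N : H →L[ℂ] H)
    (hM : ∀ f : H, HasSum (fun n => (m n * ⟪Ψ n, f⟫) • Φ n) (M f))
    (hNM : ∀ f : H, N (M f) = f) (hMN : ∀ f : H, M (N f) = f) :
    IsFrame (fun n => m n • Φ n) ∧ IsFrame (fun n => (starRingEnd ℂ) (m n) • Ψ n) := by
  obtain ⟨AΦ, BΦ, hAΦ, hBΦ, hΦ'⟩ := hΦ
  obtain ⟨AΨ, BΨ, hAΨ, hBΨ, hΨ'⟩ := hΨ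
  obtain ⟨C, hC⟩ := hmb
  have hC0 : 0 < C := lt_of_lt_of_le (norm_pos_iff.2 (hm 0)) (hC 0)
  -- norms of scaled inner products
  have hnΦ : ∀ n (f : H), ‖⟪m n • Φ n, f⟫‖ ^ 2 = ‖m n‖ ^ 2 * ‖⟪Φ n, f⟫‖ ^ 2 := by
    intro n f
    rw [inner_smul_left]
    simp [norm_mul, mul_pow]
  have hnΨ : ∀ n (f : H), ‖⟪(starRingEnd ℂ) (m n) • Ψ n, f⟫‖ ^ 2
      = ‖m n‖ ^ 2 * ‖⟪Ψ n, f⟫‖ ^ 2 := by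
    intro n f
    rw [inner_smul_left]
    simp [norm_mul, mul_pow]
  -- Bessel (summability + upper bounds)
  have besselΦ : ∀ f : H, Summable (fun n => ‖⟪m n • Φ n, f⟫‖ ^ 2) ∧
      ∑' n, ‖⟪m n • Φ n, f⟫‖ ^ 2 ≤ C ^ 2 * BΦ * ‖f‖ ^ 2 := by
    intro f
    have hsum : Summable (fun n => ‖⟪m n • Φ n, f⟫‖ ^ 2) := by
      refine Summable.of_nonneg_of_le (fun n => sq_nonneg _) (fun n => ?_)
        ((hΦ' f).1.mul_left (C ^ 2))
      rw [hnΦ]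
      have : ‖m n‖ ^ 2 ≤ C ^ 2 := by nlinarith [norm_nonneg (m n), hC n]
      exact mul_le_mul_of_nonneg_right this (sq_nonneg _)
    refine ⟨hsum, ?_⟩
    calc ∑' n, ‖⟪m n • Φ n, f⟫‖ ^ 2 ≤ ∑' n, C ^ 2 * ‖⟪Φ n, f⟫‖ ^ 2 := by
          refine Summable.tsum_le_tsum (fun n => ?_) hsum ((hΦ' f).1.mul_left (C ^ 2))
          rw [hnΦ]
          have : ‖m n‖ ^ 2 ≤ C ^ 2 := by nlinarith [norm_nonneg (m n), hC n]
          exact mul_le_mul_of_nonneg_right this (sq_nonneg _)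
      _ = C ^ 2 * ∑' n, ‖⟪Φ n, f⟫‖ ^ 2 := tsum_mul_left
      _ ≤ C ^ 2 * (BΦ * ‖f‖ ^ 2) :=
          mul_le_mul_of_nonneg_left (hΦ' f).2.2 (sq_nonneg _)
      _ = C ^ 2 * BΦ * ‖f‖ ^ 2 := by ring
  have besselΨ : ∀ f : H, Summable (fun n => ‖⟪(starRingEnd ℂ) (m n) • Ψ n, f⟫‖ ^ 2) ∧
      ∑' n, ‖⟪(starRingEnd ℂ) (m n) • Ψ n, f⟫‖ ^ 2 ≤ C ^ 2 * BΨ * ‖f‖ ^ 2 := by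
    intro f
    have hsum : Summable (fun n => ‖⟪(starRingEnd ℂ) (m n) • Ψ n, f⟫‖ ^ 2) := by
      refine Summable.of_nonneg_of_le (fun n => sq_nonneg _) (fun n => ?_)
        ((hΨ' f).1.mul_left (C ^ 2))
      rw [hnΨ]
      have : ‖m n‖ ^ 2 ≤ C ^ 2 := by nlinarith [norm_nonneg (m n), hC n]
      exact mul_le_mul_of_nonneg_right this (sq_nonneg _)
    refine ⟨hsum, ?_⟩
    calc ∑' n, ‖⟪(starRingEnd ℂ) (m n) • Ψ n, f⟫‖ ^ 2
          ≤ ∑' n, C ^ 2 * ‖⟪Ψ n, f⟫‖ ^ 2 := by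
          refine Summable.tsum_le_tsum (fun n => ?_) hsum ((hΨ' f).1.mul_left (C ^ 2))
          rw [hnΨ]
          have : ‖m n‖ ^ 2 ≤ C ^ 2 := by nlinarith [norm_nonneg (m n), hC n]
          exact mul_le_mul_of_nonneg_right this (sq_nonneg _)
      _ = C ^ 2 * ∑' n, ‖⟪Ψ n, f⟫‖ ^ 2 := tsum_mul_left
      _ ≤ C ^ 2 * (BΨ * ‖f‖ ^ 2) :=
          mul_le_mul_of_nonneg_left (hΨ' f).2.2 (sq_nonneg _)
      _ = C ^ 2 * BΨ * ‖f‖ ^ 2 := by ring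
  constructor
  · -- mΦ is a frame
    set K := BΨ * ‖N‖ ^ 2 with hKdef
    have hK : 0 ≤ K := mul_nonneg hBΨ.le (sq_nonneg _)
    refine ⟨1 / (K + 1), C ^ 2 * BΦ + 1, by positivity, by positivity, fun g => ?_⟩
    obtain ⟨hsum, hub⟩ := besselΦ g
    refine ⟨hsum, ?_, hub.trans (by nlinarith [sq_nonneg ‖g‖])⟩
    -- lower bound
    have hhs : HasSum (fun n => (m n * ⟪Ψ n, N g⟫) * ⟪g, Φ n⟫) ⟪g, g⟫ := by
      have h0 := (innerSL ℂ g).hasSum (hM (N g))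
      rw [hMN g] at h0
      simpa [inner_smul_right] using h0
    have key := lower_aux (fun n => ‖⟪m n • Φ n, g⟫‖) (fun n => ‖⟪Ψ n, N g⟫‖)
      (fun n => (m n * ⟪Ψ n, N g⟫) * ⟪g, Φ n⟫) g K hK
      (fun n => norm_nonneg _) (fun n => norm_nonneg _) hsum (hΨ' (N g)).1
      ?_ hhs ?_
    · calc (1 / (K + 1)) * ‖g‖ ^ 2 = ‖g‖ ^ 2 / (K + 1) := by ring
        _ ≤ ∑' n, ‖⟪m n • Φ n, g⟫‖ ^ 2 := key
    · calc ∑' n, ‖⟪Ψ n, N g⟫‖ ^ 2 ≤ BΨ * ‖N g‖ ^ 2 := (hΨ' (N g)).2.2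
        _ ≤ BΨ * (‖N‖ * ‖g‖) ^ 2 := by
            have := N.le_opNorm g
            gcongr
        _ = K * ‖g‖ ^ 2 := by rw [hKdef]; ring
    · intro n
      have e1 : ‖⟪m n • Φ n, g⟫‖ = ‖m n‖ * ‖⟪Φ n, g⟫‖ := by
        rw [inner_smul_left, norm_mul, RCLike.norm_conj]
      show ‖m n * ⟪Ψ n, N g⟫ * ⟪g, Φ n⟫‖ ≤ ‖⟪m n • Φ n, g⟫‖ * ‖⟪Ψ n, N g⟫‖
      rw [e1, norm_mul, norm_mul, norm_inner_symm g (Φ n)]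
      exact le_of_eq (by ring)
  · -- conj m • Ψ is a frame
    set Na := ContinuousLinearMap.adjoint N with hNa
    set K := BΦ * ‖Na‖ ^ 2 with hKdef
    have hK : 0 ≤ K := mul_nonneg hBΦ.le (sq_nonneg _)
    refine ⟨1 / (K + 1), C ^ 2 * BΨ + 1, by positivity, by positivity, fun g => ?_⟩
    obtain ⟨hsum, hub⟩ := besselΨ g
    refine ⟨hsum, ?_, hub.trans (by nlinarith [sq_nonneg ‖g‖])⟩
    have hhs : HasSum (fun n => (m n * ⟪Ψ n, g⟫) * ⟪Na g, Φ n⟫) ⟪g, g⟫ := by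
      have h0 := (innerSL ℂ (Na g)).hasSum (hM g)
      have e0 : (⟪Na g, M g⟫ : ℂ) = ⟪g, g⟫ := by
        rw [hNa, ContinuousLinearMap.adjoint_inner_left, hNM g]
      have h0' : HasSum (fun n => (m n * ⟪Ψ n, g⟫) * ⟪Na g, Φ n⟫) ⟪Na g, M g⟫ := by
        simpa [inner_smul_right] using h0
      rwa [e0] at h0'
    have key := lower_aux (fun n => ‖⟪(starRingEnd ℂ) (m n) • Ψ n, g⟫‖)
      (fun n => ‖⟪Φ n, Na g⟫‖)
      (fun n => (m n * ⟪Ψ n, g⟫) * ⟪Na g, Φ n⟫) g K hK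
      (fun n => norm_nonneg _) (fun n => norm_nonneg _) hsum (hΦ' (Na g)).1
      ?_ hhs ?_
    · calc (1 / (K + 1)) * ‖g‖ ^ 2 = ‖g‖ ^ 2 / (K + 1) := by ring
        _ ≤ ∑' n, ‖⟪(starRingEnd ℂ) (m n) • Ψ n, g⟫‖ ^ 2 := key
    · calc ∑' n, ‖⟪Φ n, Na g⟫‖ ^ 2 ≤ BΦ * ‖Na g‖ ^ 2 := (hΦ' (Na g)).2.2
        _ ≤ BΦ * (‖Na‖ * ‖g‖) ^ 2 := by
            have := Na.le_opNorm g
            gcongr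
        _ = K * ‖g‖ ^ 2 := by rw [hKdef]; ring
    · intro n
      have e1 : ‖⟪(starRingEnd ℂ) (m n) • Ψ n, g⟫‖ = ‖m n‖ * ‖⟪Ψ n, g⟫‖ := by
        rw [inner_smul_left, norm_mul, RCLike.norm_conj, RCLike.norm_conj]
      show ‖m n * ⟪Ψ n, g⟫ * ⟪Na g, Φ n⟫‖ ≤ ‖⟪(starRingEnd ℂ) (m n) • Ψ n, g⟫‖ * ‖⟪Φ n, Na g⟫‖
      rw [e1, norm_mul, norm_mul, norm_inner_symm (Na g) (Φ n)]
end

section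
/- Let Φ be the sequence (e_1, e_1, −e_1, e_2, e_2, −e_2, …) and Ψ the sequence (e_1, e_1, e_1, e_2, e_2, e_2, …) built from an orthonormal basis (e_n) of H, and let m be the periodic sequence ((5+2√5)/5, (5−2√5)/5, 1) repeated. Then M_{m,Φ,Ψ} is the identity operator on H. -/
open scoped ComplexConjugate ComplexInnerProductSpace

variable {H : Type*} [NormedAddCommGroup H] [InnerProductSpace ℂ H] [CompleteSpace H]

theorem stmt11 (e : HilbertBasis ℕ ℂ H) (Φ Ψ : ℕ → H) (m : ℕ → ℂ)
    (hΦ : ∀ n, Φ n = (if n % 3 = 2 then (-1 : ℂ) else 1) • e (n / 3))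
    (hΨ : ∀ n, Ψ n = e (n / 3))
    (hm : ∀ n, m n = if n % 3 = 0 then (((5 + 2 * Real.sqrt 5) / 5 : ℝ) : ℂ)
      else if n % 3 = 1 then (((5 - 2 * Real.sqrt 5) / 5 : ℝ) : ℂ) else 1) :
    ∀ f : H, HasSum (fun n => (m n * ⟪Ψ n, f⟫) • Φ n) f := by
  intro f
  have base : HasSum (fun k => ⟪e k, f⟫ • e k) f := by
    simpa only [e.repr_apply_apply] using e.hasSum_repr f
  set a : ℂ := (((5 + 2 * Real.sqrt 5) / 5 : ℝ) : ℂ) with ha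
  set b : ℂ := (((5 - 2 * Real.sqrt 5) / 5 : ℝ) : ℂ) with hb
  set F : ℕ → H := fun n => (m n * ⟪Ψ n, f⟫) • Φ n with hF
  set F0 : ℕ → H := fun n => if n % 3 = 0 then F n else 0 with hF0
  set F1 : ℕ → H := fun n => if n % 3 = 1 then F n else 0 with hF1
  set F2 : ℕ → H := fun n => if n % 3 = 2 then F n else 0 with hF2
  have h0 : HasSum F0 (a • f) := by
    have hinj : Function.Injective (fun k : ℕ => 3 * k) := fun x y h => by dsimp at h; omega
    rw [← hinj.hasSum_iff]
    · have : (F0 ∘ fun k => 3 * k) = fun k => a • (⟪e k, f⟫ • e k) := by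
        funext k
        simp only [Function.comp, hF0, hF, hΦ, hΨ, hm]
        have h1 : 3 * k % 3 = 0 := by omega
        have h2 : 3 * k / 3 = k := by omega
        rw [h1, h2]
        simp [smul_smul]
      rw [this]
      exact base.const_smul a
    · intro x hx
      simp only [hF0]
      rw [if_neg]
      intro h
      exact hx ⟨x / 3, by dsimp only; omega⟩
  have h1 : HasSum F1 (b • f) := by
    have hinj : Function.Injective (fun k : ℕ => 3 * k + 1) := fun x y h => by dsimp at h; omega
    rw [← hinj.hasSum_iff]
    · have : (F1 ∘ fun k => 3 * k + 1) = fun k => b • (⟪e k, f⟫ • e k) := by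
        funext k
        simp only [Function.comp, hF1, hF, hΦ, hΨ, hm]
        have h1 : (3 * k + 1) % 3 = 1 := by omega
        have h2 : (3 * k + 1) / 3 = k := by omega
        rw [h1, h2]
        simp [smul_smul]
      rw [this]
      exact base.const_smul b
    · intro x hx
      simp only [hF1]
      rw [if_neg]
      intro h
      exact hx ⟨x / 3, by dsimp only; omega⟩
  have h2 : HasSum F2 (-f) := by
    have hinj : Function.Injective (fun k : ℕ => 3 * k + 2) := fun x y h => by dsimp at h; omega
    rw [← hinj.hasSum_iff]
    · have : (F2 ∘ fun k => 3 * k + 2) = fun k => -(⟪e k, f⟫ • e k) := by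
        funext k
        simp only [Function.comp, hF2, hF, hΦ, hΨ, hm]
        have h1 : (3 * k + 2) % 3 = 2 := by omega
        have h2 : (3 * k + 2) / 3 = k := by omega
        rw [h1, h2]
        simp [smul_smul]
      rw [this]
      exact base.neg
    · intro x hx
      simp only [hF2]
      rw [if_neg]
      intro h
      exact hx ⟨x / 3, by dsimp only; omega⟩
  have hsum : HasSum (fun n => F0 n + F1 n + F2 n) (a • f + b • f + -f) :=
    (h0.add h1).add h2
  have hab : a + b = 2 := by
    rw [ha, hb]
    push_cast
    ring
  have heq : (fun n => F0 n + F1 n + F2 n) = F := by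
    funext n
    simp only [hF0, hF1, hF2]
    have : n % 3 = 0 ∨ n % 3 = 1 ∨ n % 3 = 2 := by omega
    rcases this with h | h | h <;> simp [h]
  have hval : a • f + b • f + -f = f := by
    rw [← add_smul, hab]
    module
  rw [heq, hval] at hsum
  exact hsum
end

section
/- Let (e_n) be an orthonormal basis of H, Φ = (e_1, e_1, −e_1, e_2, e_2, −e_2, …), Ψ = (e_1, e_1, e_1, e_2, e_2, e_2, …), and m the 3-periodic sequence ((5+2√5)/5, (5−2√5)/5, 1). Then there exist no scalar sequences (c_n) and (d_n) with c_n d̄_n = m_n for all n and a bounded bijective operator V : H → H with V(c_n φ_n) = d_n ψ_n for all n. In particular Ψ is not equivalent to mΦ and Φ is not equivalent to m̄Ψ. -/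
open scoped ComplexConjugate ComplexInnerProductSpace

variable {H : Type*} [NormedAddCommGroup H] [InnerProductSpace ℂ H] [CompleteSpace H]

theorem stmt12 (e : HilbertBasis ℕ ℂ H) (Φ Ψ : ℕ → H) (m : ℕ → ℂ)
    (hΦ : ∀ n, Φ n = (if n % 3 = 2 then (-1 : ℂ) else 1) • e (n / 3))
    (hΨ : ∀ n, Ψ n = e (n / 3))
    (hm : ∀ n, m n = if n % 3 = 0 then (((5 + 2 * Real.sqrt 5) / 5 : ℝ) : ℂ)
      else if n % 3 = 1 then (((5 - 2 * Real.sqrt 5) / 5 : ℝ) : ℂ) else 1) :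
    (¬ ∃ (c d : ℕ → ℂ) (V : H →L[ℂ] H), Function.Bijective V ∧
        (∀ n, c n * (starRingEnd ℂ) (d n) = m n) ∧ (∀ n, V (c n • Φ n) = d n • Ψ n)) ∧
    (¬ ∃ V : H →L[ℂ] H, Function.Bijective V ∧ ∀ n, V (m n • Φ n) = Ψ n) ∧
    (¬ ∃ V : H →L[ℂ] H, Function.Bijective V ∧ ∀ n, V ((starRingEnd ℂ) (m n) • Ψ n) = Φ n) := by
  have he : e 0 ≠ 0 := by
    intro h
    have h1 := e.orthonormal.1 0
    rw [h] at h1; simp at h1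
  have hs5 : (0:ℝ) ≤ Real.sqrt 5 := Real.sqrt_nonneg 5
  set r : ℝ := (5 + 2 * Real.sqrt 5) / 5 with hr
  have hrpos : 0 < r := by positivity
  have hrC : ((r : ℂ)) ≠ 0 := Complex.ofReal_ne_zero.mpr (ne_of_gt hrpos)
  refine ⟨?_, ?_, ?_⟩
  · rintro ⟨c, d, V, hVbij, hcd, hV⟩
    have h0 := hV 0
    have h2 := hV 2
    simp only [hΦ, hΨ] at h0 h2
    norm_num at h0 h2
    -- h0 : c 0 • V E = d 0 • E,  h2 : -(c 2 • V E) = d 2 • E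
    have key : (c 2 * d 0 + c 0 * d 2) • (e 0) = 0 := by
      calc (c 2 * d 0 + c 0 * d 2) • (e 0)
          = c 2 • (d 0 • e 0) + c 0 • (d 2 • e 0) := by module
        _ = c 2 • (c 0 • V (e 0)) + c 0 • (-(c 2 • V (e 0))) := by rw [h0, h2]
        _ = 0 := by module
    have key' : c 2 * d 0 = -(c 0 * d 2) := by
      rcases smul_eq_zero.mp key with h4 | h4
      · linear_combination h4
      · exact absurd h4 he
    have hm0 : c 0 * (starRingEnd ℂ) (d 0) = (r : ℂ) := by
      have := hcd 0; rw [hm 0] at this; norm_num at this; exact this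
    have hm2 : c 2 * (starRingEnd ℂ) (d 2) = 1 := by
      have := hcd 2; rw [hm 2] at this; norm_num at this; exact this
    have keyc : (starRingEnd ℂ) (c 2) * (starRingEnd ℂ) (d 0)
        = -((starRingEnd ℂ) (c 0) * (starRingEnd ℂ) (d 2)) := by
      have := congrArg (starRingEnd ℂ) key'
      simpa [map_mul] using this
    have hfin : (Complex.normSq (c 2) : ℂ) * (r : ℂ) = -(Complex.normSq (c 0) : ℂ) := by
      have h5 : (c 2 * (starRingEnd ℂ) (c 2)) * (c 0 * (starRingEnd ℂ) (d 0))
          = -((c 0 * (starRingEnd ℂ) (c 0)) * (c 2 * (starRingEnd ℂ) (d 2))) := by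
        linear_combination (c 0 * c 2) * keyc
      rw [hm0, hm2, Complex.mul_conj, Complex.mul_conj] at h5
      simpa using h5
    have hfin' : Complex.normSq (c 2) * r = -Complex.normSq (c 0) := by
      exact_mod_cast hfin
    have hc0 : c 0 ≠ 0 := by
      intro h; apply hrC; rw [← hm0, h, zero_mul]
    have hc2 : c 2 ≠ 0 := by
      intro h; rw [h, zero_mul] at hm2; exact zero_ne_one hm2
    have p0 : 0 < Complex.normSq (c 0) := Complex.normSq_pos.mpr hc0
    have p2 : 0 < Complex.normSq (c 2) := Complex.normSq_pos.mpr hc2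
    nlinarith
  · rintro ⟨V, hVbij, hV⟩
    have h0 := hV 0
    have h2 := hV 2
    simp only [hΦ, hΨ, hm] at h0 h2
    norm_num at h0 h2
    have hVE : V (e 0) = -(e 0) := neg_eq_iff_eq_neg.mp h2
    have h5 : r • (-(e 0)) = e 0 := by rw [← hVE]; exact h0
    have h6 : (r + 1) • (e 0) = (0 : H) := by
      calc (r + 1) • (e 0) = -(r • (-(e 0))) + e 0 := by module
        _ = -(e 0) + e 0 := by rw [h5]
        _ = 0 := by abel
    rcases smul_eq_zero.mp h6 with h7 | h7
    · linarith
    · exact he h7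
  · rintro ⟨V, hVbij, hV⟩
    have h0 := hV 0
    have h2 := hV 2
    simp only [hΦ, hΨ, hm] at h0 h2
    norm_num at h0 h2
    have h5 : r • (-(e 0)) = e 0 := by rw [← h2]; exact h0
    have h6 : (r + 1) • (e 0) = (0 : H) := by
      calc (r + 1) • (e 0) = -(r • (-(e 0))) + e 0 := by module
        _ = -(e 0) + e 0 := by rw [h5]
        _ = 0 := by abel
    rcases smul_eq_zero.mp h6 with h7 | h7
    · linarith
    · exact he h7
end

section
/- Let Φ and Ψ be Riesz bases for H and m a semi-normalized symbol. Then M_{m,Φ,Ψ} is invertible and M_{m,Φ,Ψ}^{-1} = M_{1/m, Ψ̃, Φ̃}, where Φ̃ and Ψ̃ are the canonical (biorthogonal) dual bases. -/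
open scoped ComplexConjugate ComplexInnerProductSpace

variable {H : Type*} [NormedAddCommGroup H] [InnerProductSpace ℂ H] [CompleteSpace H]

/-- `Φ` is a Riesz basis for `H`: the image of an orthonormal basis under a
bounded bijective operator. -/
def IsRieszBasis (Φ : ℕ → H) : Prop :=
  ∃ (e : HilbertBasis ℕ ℂ H) (V : H →L[ℂ] H), Function.Bijective V ∧ ∀ n, V (e n) = Φ n

open scoped ENNReal InnerProduct lp
open ContinuousLinearMap

/-!
Write `Φ = V e` and `Ψ = W e'` with Hilbert bases `e, e'` and invertible `V, W`. Then
`S_Φ = V V†`, so the canonical dual is `Φ̃ = (V⁻¹)† e`, and likewise `Ψ̃ = (W⁻¹)† e'`.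
With `U_e : H ≃ ℓ²` the coefficient isometry and `D_m` pointwise multiplication by `m`,
`M_{m,Φ,Ψ} = V U_e⁻¹ D_m U_{e'} W†`, and `M_{1/m,Ψ̃,Φ̃}` is the composite of the inverse
factors in the reverse order.
-/

section lpMul

variable {ι 𝕜 : Type*} [RCLike 𝕜] {p : ℝ≥0∞}

lemma norm_mul_le_norm_smul_apply {m : ι → 𝕜} {C : ℝ} (hC : ∀ i, ‖m i‖ ≤ C)
    (g : lp (fun _ : ι => 𝕜) p) (i : ι) : ‖m i * g i‖ ≤ ‖((C : 𝕜) • g) i‖ := by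
  rw [norm_mul, lp.coeFn_smul, Pi.smul_apply, norm_smul, RCLike.norm_ofReal]
  gcongr
  exact (hC i).trans (le_abs_self C)

variable [Fact (1 ≤ p)]

variable (p) in
noncomputable def lpMul (m : ι → 𝕜) (C : ℝ) (hC : ∀ i, ‖m i‖ ≤ C) :
    lp (fun _ : ι => 𝕜) p →L[𝕜] lp (fun _ : ι => 𝕜) p :=
  LinearMap.mkContinuous
    { toFun g := ⟨fun i => m i * g i,
        (lp.memℓp ((C : 𝕜) • g)).mono' (norm_mul_le_norm_smul_apply hC g)⟩
      map_add' g h := lp.ext <| funext fun i => mul_add (m i) (g i) (h i)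
      map_smul' c g := lp.ext <| funext fun i => mul_left_comm (m i) c (g i) }
    |C|
    (fun g => by
      have hp : p ≠ 0 := (zero_lt_one.trans_le Fact.out).ne'
      refine (lp.norm_mono hp (y := (C : 𝕜) • g) (norm_mul_le_norm_smul_apply hC g)).trans ?_
      rw [lp.norm_const_smul hp, RCLike.norm_ofReal])

variable (p) in
noncomputable def lpMulEquiv (m : ι → 𝕜) (a b : ℝ) (ha : 0 < a)
    (hm : ∀ i, a ≤ ‖m i‖ ∧ ‖m i‖ ≤ b) : lp (fun _ : ι => 𝕜) p ≃L[𝕜] lp (fun _ : ι => 𝕜) p :=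
  have hm0 (i : ι) : m i ≠ 0 := norm_pos_iff.mp (ha.trans_le (hm i).1)
  ContinuousLinearEquiv.equivOfInverse
    (lpMul p m b fun i => (hm i).2)
    (lpMul p (fun i => (m i)⁻¹) a⁻¹ fun i => by
      rw [norm_inv]; exact inv_anti₀ ha (hm i).1)
    (fun g => lp.ext <| funext fun i => inv_mul_cancel_left₀ (hm0 i) (g i))
    (fun g => lp.ext <| funext fun i => mul_inv_cancel_left₀ (hm0 i) (g i))

variable (m : ι → 𝕜) (a b : ℝ) (ha : 0 < a) (hm : ∀ i, a ≤ ‖m i‖ ∧ ‖m i‖ ≤ b)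
  (g : lp (fun _ : ι => 𝕜) p) (i : ι)

@[simp]
lemma lpMulEquiv_apply : lpMulEquiv p m a b ha hm g i = m i * g i := rfl

@[simp]
lemma lpMulEquiv_symm_apply : (lpMulEquiv p m a b ha hm).symm g i = (m i)⁻¹ * g i := rfl

end lpMul

namespace ContinuousLinearEquiv

variable {𝕜 E F : Type*} [RCLike 𝕜] [NormedAddCommGroup E] [InnerProductSpace 𝕜 E]
  [CompleteSpace E] [NormedAddCommGroup F] [InnerProductSpace 𝕜 F] [CompleteSpace F]

noncomputable def adjoint (A : E ≃L[𝕜] F) : F ≃L[𝕜] E :=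
  equivOfInverse' ((A : E →L[𝕜] F)†) ((A.symm : F →L[𝕜] E)†)
    (by rw [← ContinuousLinearMap.adjoint_comp, coe_symm_comp_coe, ContinuousLinearMap.adjoint_id])
    (by rw [← ContinuousLinearMap.adjoint_comp, coe_comp_coe_symm, ContinuousLinearMap.adjoint_id])

@[simp]
lemma adjoint_apply (A : E ≃L[𝕜] F) (y : F) : A.adjoint y = ((A : E →L[𝕜] F)†) y := rfl

@[simp]
lemma adjoint_symm_apply (A : E ≃L[𝕜] F) (x : E) : A.adjoint.symm x = ((A.symm : F →L[𝕜] E)†) x :=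
  rfl

end ContinuousLinearEquiv

lemma IsRieszBasis.exists_continuousLinearEquiv {Φ : ℕ → H} (hΦ : IsRieszBasis Φ) :
    ∃ (e : HilbertBasis ℕ ℂ H) (V : H ≃L[ℂ] H), ∀ n, V (e n) = Φ n := by
  obtain ⟨e, V, hV, hVe⟩ := hΦ
  exact ⟨e, .ofBijective V (LinearMap.ker_eq_bot.mpr hV.1) (LinearMap.range_eq_top.mpr hV.2),
    hVe⟩

lemma HilbertBasis.hasSum_smul_map {ι 𝕜 E F : Type*} [RCLike 𝕜] [NormedAddCommGroup E]
    [InnerProductSpace 𝕜 E] [NormedAddCommGroup F] [NormedSpace 𝕜 F] (e : HilbertBasis ι 𝕜 E)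
    (A : E →L[𝕜] F) (c : ℓ²(ι, 𝕜)) : HasSum (fun i => c i • A (e i)) (A (e.repr.symm c)) := by
  simpa only [map_smul] using (e.hasSum_repr_symm c).mapL A

lemma frameOp_eq_apply_adjoint {Φ : ℕ → H} {e : HilbertBasis ℕ ℂ H} {V : H →L[ℂ] H}
    (hV : ∀ n, V (e n) = Φ n) (f : H) : frameOp Φ f = V ((V†) f) := by
  refine HasSum.tsum_eq ?_
  simpa only [e.repr_apply_apply, adjoint_inner_right, hV, LinearIsometryEquiv.symm_apply_apply]
    using e.hasSum_smul_map V (e.repr ((V†) f))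

lemma eq_adjoint_symm_of_frameOp_eq {Φ : ℕ → H} {e : HilbertBasis ℕ ℂ H} {V : H ≃L[ℂ] H}
    (hV : ∀ n, V (e n) = Φ n) {x : H} {n : ℕ} (hx : frameOp Φ x = Φ n) :
    x = ((V.symm : H →L[ℂ] H)†) (e n) := by
  have hVx : ((V : H →L[ℂ] H)†) x = e n :=
    V.injective (by rw [hV, ← hx, frameOp_eq_apply_adjoint (V := V) hV]; rfl)
  rw [← hVx, ← V.adjoint_apply, ← V.adjoint_symm_apply, ContinuousLinearEquiv.symm_apply_apply]

theorem stmt19 (Φ Ψ Φt Ψt : ℕ → H) (m : ℕ → ℂ)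
    (hΦ : IsRieszBasis Φ) (hΨ : IsRieszBasis Ψ) (hm : SemiNormalized m)
    (hΦt : ∀ n, frameOp Φ (Φt n) = Φ n) (hΨt : ∀ n, frameOp Ψ (Ψt n) = Ψ n) :
    ∃ M N : H →L[ℂ] H,
      (∀ f : H, HasSum (fun n => (m n * ⟪Ψ n, f⟫) • Φ n) (M f)) ∧
      (∀ f : H, N (M f) = f) ∧ (∀ f : H, M (N f) = f) ∧
      ∀ f : H, HasSum (fun n => ((m n)⁻¹ * ⟪Φt n, f⟫) • Ψt n) (N f) := by
  obtain ⟨e, V, hV⟩ := hΦ.exists_continuousLinearEquiv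
  obtain ⟨e', W, hW⟩ := hΨ.exists_continuousLinearEquiv
  obtain ⟨a, b, ha, hab⟩ := hm
  let D := lpMulEquiv 2 m a b ha hab
  let T : H ≃L[ℂ] H := W.adjoint.trans <| e'.repr.toContinuousLinearEquiv.trans <|
    D.trans <| e.repr.symm.toContinuousLinearEquiv.trans V
  refine ⟨T, T.symm, fun f => ?_, T.symm_apply_apply, T.apply_symm_apply, fun f => ?_⟩
  · convert e.hasSum_smul_map (V : H →L[ℂ] H) (D (e'.repr (((W : H →L[ℂ] H)†) f))) using 1
    · ext n
      simp [D, e'.repr_apply_apply, adjoint_inner_right, hW, hV]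
    · rfl
  · convert e'.hasSum_smul_map ((W.symm : H →L[ℂ] H)†) (D.symm (e.repr (V.symm f))) using 1
    · ext n
      simp [D, eq_adjoint_symm_of_frameOp_eq hV (hΦt n),
        eq_adjoint_symm_of_frameOp_eq hW (hΨt n), e.repr_apply_apply, adjoint_inner_left]
    · rfl
end
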